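/- Let f be an interval map of class C³ with non-flat critical points, topologically exact on its Julia set J(f). If p is a hyperbolic repelling periodic point of f in J(f) and x₀ ∈ J(f), then limsup_{n→∞} (1/n) ln min{|Df^n(x)| : x ∈ f^{−n}(x₀)} ≤ χ_p(f). Consequently, limsup_{n→∞} (1/n) ln min{|Df^n(x)| : x ∈ f^{−n}(x₀)} ≤ inf{χ_p(f) : p hyperbolic repelling periodic point in J(f)}. -/

import Mathlib

/-!
Near the repelling periodic point `p`, the map `g = f^ℓ` has `1 ≤ |Dg| ≤ Λ` on a small ball `B`
around `p`, for any `Λ > |Dg(p)|`; hence `g(B) ⊇ B` and any point of `B` has a `g^k`-preimage in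
`B` with `|Dg^k| ≤ Λ^k`. Exactness puts `x₀` in `f^{n₀+r}(B)` for every `r < ℓ`, at a bounded
derivative cost, so every large `n` has a preimage of `x₀` with `|Df^n| ≤ C Λ^{n/ℓ}`. Letting
`Λ ↓ |Dg(p)|` gives the exponent `χ_p`.
-/

open Metric Set Filter

/-- The minimal derivative `min{|Df^n(x)| : x ∈ f^{-n}(x₀)}` over the `n`-th preimages. -/
noncomputable def preimageDerivMin (f : ℝ → ℝ) (x₀ : ℝ) (n : ℕ) : ℝ :=
  sInf ((fun x => |deriv (f^[n]) x|) '' (f^[n] ⁻¹' {x₀}))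

open Topology

theorem ContDiff.iterate {𝕜 E : Type*} [NontriviallyNormedField 𝕜] [NormedAddCommGroup E]
    [NormedSpace 𝕜 E] {n : WithTop ℕ∞} {f : E → E} (hf : ContDiff 𝕜 n f) (k : ℕ) :
    ContDiff 𝕜 n f^[k] := by
  induction k with
  | zero => exact contDiff_id
  | succ k ih => rw [Function.iterate_succ]; exact ih.comp hf

theorem deriv_iterate_add {𝕜 : Type*} [NontriviallyNormedField 𝕜] {f : 𝕜 → 𝕜}
    (hf : Differentiable 𝕜 f) (m n : ℕ) (x : 𝕜) :
    deriv f^[m + n] x = deriv f^[m] (f^[n] x) * deriv f^[n] x := by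
  rw [Function.iterate_add]
  exact deriv_comp x ((hf.iterate m).differentiableAt) ((hf.iterate n).differentiableAt)

theorem limsup_le_of_eventually_le_of_tendsto {u v : ℕ → ℝ} {c : ℝ} (hc : 0 ≤ c)
    (huv : u ≤ᶠ[atTop] v) (hv : Tendsto v atTop (𝓝 c)) : limsup u atTop ≤ c := by
  by_cases hu : IsCoboundedUnder (· ≤ ·) atTop u
  · exact (limsup_le_limsup huv hu hv.isBoundedUnder_le).trans_eq hv.limsup_eq
  · -- an unbounded-below `limsup` in `ℝ` takes the junk value `0`
    rwa [Real.limsup_of_not_isCoboundedUnder hu]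

theorem limsup_inv_mul_log_le {u : ℕ → ℝ} {C Λ : ℝ} {ℓ : ℕ} (hC : 1 ≤ C) (hΛ : 1 ≤ Λ)
    (hu₀ : ∀ n, 0 ≤ u n) (hu : ∀ᶠ n in atTop, u n ≤ C * Λ ^ (n / ℓ)) :
    limsup (fun n : ℕ => 1 / (n : ℝ) * Real.log (u n)) atTop ≤ 1 / (ℓ : ℝ) * Real.log Λ := by
  have hlogC := Real.log_nonneg hC
  have hlogΛ := Real.log_nonneg hΛ
  refine limsup_le_of_eventually_le_of_tendsto (v := fun n => Real.log C / n + 1 / ℓ * Real.log Λ)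
    (by positivity) ?_ ?_
  · filter_upwards [hu, eventually_gt_atTop 0] with n hn hn₀
    have hnR : (0 : ℝ) < n := by exact_mod_cast hn₀
    rcases (hu₀ n).eq_or_lt with h0 | hpos
    · rw [← h0, Real.log_zero, mul_zero]
      positivity
    have hlog : Real.log (u n) ≤ Real.log C + (n / ℓ : ℕ) * Real.log Λ := by
      calc Real.log (u n) ≤ Real.log (C * Λ ^ (n / ℓ)) := Real.log_le_log hpos hn
        _ = Real.log C + (n / ℓ : ℕ) * Real.log Λ := by
          rw [Real.log_mul (by positivity) (by positivity), Real.log_pow]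
    have hdiv : ((n / ℓ : ℕ) : ℝ) ≤ n * (1 / ℓ) := by
      rw [mul_one_div]; exact Nat.cast_div_le
    calc 1 / (n : ℝ) * Real.log (u n) ≤ 1 / n * (Real.log C + (n / ℓ : ℕ) * Real.log Λ) := by
          gcongr
      _ ≤ 1 / n * (Real.log C + n * (1 / ℓ) * Real.log Λ) := by gcongr
      _ = Real.log C / n + 1 / (ℓ : ℝ) * Real.log Λ := by field_simp
  · simpa using (tendsto_const_div_atTop_nhds_zero_nat (Real.log C)).add_const
      (1 / (ℓ : ℝ) * Real.log Λ)

theorem preimageDerivMin_nonneg (f : ℝ → ℝ) (x₀ : ℝ) (n : ℕ) : 0 ≤ preimageDerivMin f x₀ n :=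
  Real.sInf_nonneg (by rintro _ ⟨x, -, rfl⟩; exact abs_nonneg _)

theorem preimageDerivMin_le {f : ℝ → ℝ} {x₀ x : ℝ} {n : ℕ} (hx : f^[n] x = x₀) :
    preimageDerivMin f x₀ n ≤ |deriv f^[n] x| :=
  csInf_le ⟨0, by rintro _ ⟨y, -, rfl⟩; exact abs_nonneg _⟩ ⟨x, hx, rfl⟩

theorem closedBall_subset_image_closedBall_of_le_deriv {F : ℝ → ℝ} {p δ μ : ℝ}
    (hF : Differentiable ℝ F) (hδ : 0 ≤ δ) (hμ : ∀ x ∈ closedBall p δ, μ ≤ deriv F x) :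
    closedBall (F p) (μ * δ) ⊆ F '' closedBall p δ := by
  simp only [Real.closedBall_eq_Icc] at hμ ⊢
  have hmvt := (convex_Icc (p - δ) (p + δ)).mul_sub_le_image_sub_of_le_deriv
    hF.continuous.continuousOn hF.differentiableOn fun x hx => hμ x (interior_subset hx)
  have hp : p ∈ Icc (p - δ) (p + δ) := ⟨by linarith, by linarith⟩
  have hleft := hmvt (p - δ) (left_mem_Icc.2 (by linarith)) p hp (by linarith)
  have hright := hmvt p hp (p + δ) (right_mem_Icc.2 (by linarith)) (by linarith)
  refine Subset.trans ?_ (intermediate_value_Icc (by linarith) hF.continuous.continuousOn)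
  exact Icc_subset_Icc (by linarith) (by linarith)

theorem closedBall_subset_image_closedBall_of_le_abs_deriv {F : ℝ → ℝ} {p δ μ : ℝ}
    (hF : Differentiable ℝ F) (hδ : 0 ≤ δ) (hμ₀ : 0 < μ)
    (hμ : ∀ x ∈ closedBall p δ, μ ≤ |deriv F x|) :
    closedBall (F p) (μ * δ) ⊆ F '' closedBall p δ := by
  have hne : ∀ x ∈ closedBall p δ, deriv F x ≠ 0 := fun x hx h0 => by
    have := hμ x hx; rw [h0, abs_zero] at this; linarith
  -- by Darboux's theorem, `deriv F` has constant sign on the ball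
  rcases hasDerivWithinAt_forall_lt_or_forall_gt_of_forall_ne (convex_closedBall p δ)
    (fun x _ => (hF x).hasDerivAt.hasDerivWithinAt) hne with hneg | hpos
  · have hμneg : ∀ x ∈ closedBall p δ, μ ≤ deriv (fun y => -F y) x := fun x hx => by
      rw [deriv.fun_neg, ← abs_of_neg (hneg x hx)]; exact hμ x hx
    intro z hz
    obtain ⟨x, hx, hxz⟩ := closedBall_subset_image_closedBall_of_le_deriv hF.neg hδ hμneg
      (show -z ∈ closedBall (-F p) (μ * δ) by simpa [dist_neg_neg] using hz)
    exact ⟨x, hx, neg_injective hxz⟩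
  · exact closedBall_subset_image_closedBall_of_le_deriv hF hδ fun x hx =>
      (abs_of_pos (hpos x hx)).symm ▸ hμ x hx

theorem exists_iterate_eq_abs_deriv_le {g : ℝ → ℝ} {p δ Λ : ℝ} (hg : Differentiable ℝ g)
    (hp : g p = p) (hδ : 0 ≤ δ)
    (hbd : ∀ x ∈ closedBall p δ, 1 ≤ |deriv g x| ∧ |deriv g x| ≤ Λ) (k : ℕ) :
    ∀ z ∈ closedBall p δ, ∃ x ∈ closedBall p δ, g^[k] x = z ∧ |deriv g^[k] x| ≤ Λ ^ k := by
  induction k with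
  | zero => exact fun z hz => ⟨z, hz, rfl, by simp⟩
  | succ k ih =>
    intro z hz
    obtain ⟨w, hw, hwz, hdw⟩ := ih z hz
    have hcover := closedBall_subset_image_closedBall_of_le_abs_deriv hg hδ one_pos
      fun x hx => (hbd x hx).1
    obtain ⟨x, hx, hxw⟩ := hcover (by rwa [hp, one_mul])
    refine ⟨x, hx, by rw [Function.iterate_succ_apply, hxw, hwz], ?_⟩
    rw [deriv_iterate_add hg, Function.iterate_one, hxw, abs_mul, pow_succ]
    exact mul_le_mul hdw (hbd x hx).2 (abs_nonneg _) ((abs_nonneg _).trans hdw)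

def LocallyEventuallyOnto {α : Type*} [TopologicalSpace α] (f : α → α) (J : Set α) : Prop :=
  ∀ U : Set α, IsOpen U → (U ∩ J).Nonempty → ∃ n : ℕ, J ⊆ f^[n] '' U

namespace LocallyEventuallyOnto

variable {α : Type*} [TopologicalSpace α] {f : α → α} {J : Set α}

theorem surjOn [T1Space α] (h : LocallyEventuallyOnto f J) (hJ : f ⁻¹' J ⊆ J)
    (hJnt : ¬ J.Subsingleton) : SurjOn f J J := by
  obtain ⟨u, hu, v, hv, huv⟩ := not_subsingleton_iff.1 hJnt
  obtain ⟨n, hn⟩ := h {v}ᶜ isOpen_compl_singleton ⟨u, huv, hu⟩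
  cases n with
  | zero => exact absurd (hn hv) (by simp)
  | succ n =>
    intro y hy
    obtain ⟨w, -, rfl⟩ := hn hy
    rw [Function.iterate_succ_apply'] at hy ⊢
    exact ⟨f^[n] w, hJ hy, rfl⟩

theorem exists_forall_subset_image_iterate (h : LocallyEventuallyOnto f J) (hsurj : SurjOn f J J)
    {U : Set α} (hU : IsOpen U) (hUJ : (U ∩ J).Nonempty) :
    ∃ n₀ : ℕ, ∀ r : ℕ, J ⊆ f^[r + n₀] '' U := by
  obtain ⟨n₀, hn₀⟩ := h U hU hUJ
  refine ⟨n₀, fun r => ?_⟩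
  rw [Function.iterate_add, image_comp]
  exact (hsurj.iterate r).trans (image_mono hn₀)

end LocallyEventuallyOnto

theorem eventually_preimageDerivMin_le {f : ℝ → ℝ} {J : Set ℝ} {p x₀ Λ : ℝ} {ℓ : ℕ}
    (hf : ContDiff ℝ 1 f) (hexact : LocallyEventuallyOnto f J) (hsurj : SurjOn f J J)
    (hp : p ∈ J) (hℓ : 0 < ℓ) (hper : f^[ℓ] p = p) (hrep : 1 < |deriv f^[ℓ] p|)
    (hΛ : |deriv f^[ℓ] p| < Λ) (hx₀ : x₀ ∈ J) :
    ∃ C ≥ 1, ∀ᶠ n in atTop, preimageDerivMin f x₀ n ≤ C * Λ ^ (n / ℓ) := by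
  have hdf : Differentiable ℝ f := hf.differentiable one_ne_zero
  have hcont : ContinuousAt (fun x => |deriv f^[ℓ] x|) p :=
    ((hf.iterate ℓ).continuous_deriv le_rfl).abs.continuousAt
  obtain ⟨δ, hδ, hbd⟩ := nhds_basis_closedBall.eventually_iff.1
    (hcont.eventually (Ioo_mem_nhds hrep hΛ))
  have hpull := exists_iterate_eq_abs_deriv_le (hdf.iterate ℓ) hper hδ.le
    fun x hx => ⟨(hbd hx).1.le, (hbd hx).2.le⟩
  obtain ⟨n₀, hn₀⟩ := hexact.exists_forall_subset_image_iterate hsurj isOpen_ball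
    ⟨p, mem_ball_self hδ, hp⟩
  choose y hy hyx₀ using fun r => hn₀ r hx₀
  set C := 1 + ∑ r ∈ Finset.range ℓ, |deriv f^[r + n₀] (y r)|
  have hCr : ∀ r < ℓ, |deriv f^[r + n₀] (y r)| ≤ C := fun r hr => by
    have := Finset.single_le_sum (f := fun r => |deriv f^[r + n₀] (y r)|)
      (fun r _ => abs_nonneg _) (Finset.mem_range.2 hr)
    linarith
  refine ⟨C, le_add_of_nonneg_right (Finset.sum_nonneg fun r _ => abs_nonneg _),
    eventually_atTop.2 ⟨n₀, fun n hn => ?_⟩⟩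
  obtain ⟨r, k, hr, hk, hn⟩ : ∃ r k, r < ℓ ∧ k ≤ n / ℓ ∧ n = (r + n₀) + ℓ * k :=
    ⟨(n - n₀) % ℓ, (n - n₀) / ℓ, Nat.mod_lt _ hℓ, Nat.div_le_div_right (Nat.sub_le n n₀),
      by have := Nat.mod_add_div (n - n₀) ℓ; omega⟩
  obtain ⟨x, -, hx, hdx⟩ := hpull k (y r) (ball_subset_closedBall (hy r))
  rw [← Function.iterate_mul] at hx hdx
  have hΛ1 : 1 ≤ Λ := by linarith
  calc preimageDerivMin f x₀ n ≤ |deriv f^[n] x| :=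
        preimageDerivMin_le (by rw [hn, Function.iterate_add_apply, hx, hyx₀])
    _ = |deriv f^[r + n₀] (y r)| * |deriv f^[ℓ * k] x| := by
        rw [hn, deriv_iterate_add hdf, hx, abs_mul]
    _ ≤ C * Λ ^ k := mul_le_mul (hCr r hr) hdx (abs_nonneg _) (by positivity)
    _ ≤ C * Λ ^ (n / ℓ) := by gcongr

theorem limsup_le_periodic_exponent {f : ℝ → ℝ} {J : Set ℝ} {p x₀ : ℝ} {ℓ : ℕ}
    (hf : ContDiff ℝ 1 f) (hexact : LocallyEventuallyOnto f J) (hsurj : SurjOn f J J)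
    (hp : p ∈ J) (hℓ : 0 < ℓ) (hper : f^[ℓ] p = p) (hrep : 1 < |deriv f^[ℓ] p|) (hx₀ : x₀ ∈ J) :
    limsup (fun n : ℕ => (1 / (n : ℝ)) * Real.log (preimageDerivMin f x₀ n)) atTop ≤
      (1 / (ℓ : ℝ)) * Real.log |deriv f^[ℓ] p| := by
  have hcont : ContinuousAt (fun Λ => 1 / (ℓ : ℝ) * Real.log Λ) |deriv f^[ℓ] p| :=
    (Real.continuousAt_log (by positivity)).const_mul _
  refine ge_of_tendsto (hcont.tendsto.mono_left (nhdsWithin_le_nhds (s := Ioi |deriv f^[ℓ] p|)))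
    (eventually_nhdsWithin_of_forall fun Λ hΛ => ?_)
  obtain ⟨C, hC, hbound⟩ := eventually_preimageDerivMin_le hf hexact hsurj hp hℓ hper hrep hΛ hx₀
  exact limsup_inv_mul_log_le hC (by linarith [mem_Ioi.1 hΛ]) (preimageDerivMin_nonneg f x₀) hbound

theorem limsup_min_deriv_le_periodic_exponent_general
    (a b : ℝ) (f : ℝ → ℝ)
    (hf : ContDiff ℝ 3 f)
    (Jf : Set ℝ) (hJfinv : f ⁻¹' Jf = Jf)
    (hJfnt : ¬ Jf.Subsingleton)
    (hexact : ∀ U : Set ℝ, IsOpen U → (U ∩ Jf).Nonempty →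
      ∃ n : ℕ, f^[n] '' (U ∩ Icc a b) = Jf)
    (p : ℝ) (hp : p ∈ Jf) (ℓ : ℕ) (hℓ : 1 ≤ ℓ) (hper : f^[ℓ] p = p)
    (hrep : 1 < |deriv (f^[ℓ]) p|)
    (x₀ : ℝ) (hx₀ : x₀ ∈ Jf) :
    Filter.limsup (fun n : ℕ => (1 / (n : ℝ)) * Real.log (preimageDerivMin f x₀ n))
        Filter.atTop ≤ (1 / (ℓ : ℝ)) * Real.log |deriv (f^[ℓ]) p| ∧
    Filter.limsup (fun n : ℕ => (1 / (n : ℝ)) * Real.log (preimageDerivMin f x₀ n))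
        Filter.atTop ≤
      sInf {χ : ℝ | ∃ q ∈ Jf, ∃ m : ℕ, 1 ≤ m ∧ f^[m] q = q ∧ 1 < |deriv (f^[m]) q| ∧
        χ = (1 / (m : ℝ)) * Real.log |deriv (f^[m]) q|} := by
  have hleo : LocallyEventuallyOnto f Jf := fun U hU hUJ =>
    (hexact U hU hUJ).imp fun _ hn => hn.symm.subset.trans (image_mono inter_subset_left)
  have hsurj := hleo.surjOn hJfinv.subset hJfnt
  have hbound : ∀ q ∈ Jf, ∀ m : ℕ, 1 ≤ m → f^[m] q = q → 1 < |deriv f^[m] q| →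
      limsup (fun n : ℕ => (1 / (n : ℝ)) * Real.log (preimageDerivMin f x₀ n)) atTop ≤
        (1 / (m : ℝ)) * Real.log |deriv f^[m] q| := fun q hq m hm hqper hqrep =>
    limsup_le_periodic_exponent (hf.of_le (by norm_num)) hleo hsurj hq hm hqper hqrep hx₀
  refine ⟨hbound p hp ℓ hℓ hper hrep, le_csInf ⟨_, p, hp, ℓ, hℓ, hper, hrep, rfl⟩ ?_⟩
  rintro _ ⟨q, hq, m, hm, hqper, hqrep, rfl⟩
  exact hbound q hq m hm hqper hqrep

/-- For a `C³` interval map with non-flat critical points, topologically exact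
on its Julia set `Jf`, and for any hyperbolic repelling periodic point `p ∈ Jf` of period
`ℓ` and any `x₀ ∈ Jf`:
`limsup (1/n) ln min{|Df^n(x)| : x ∈ f^{-n}(x₀)} ≤ χ_p(f)`;
consequently the limsup is at most the infimum of the exponents of all hyperbolic
repelling periodic points in `Jf`. -/
theorem limsup_min_deriv_le_periodic_exponent
    (a b : ℝ) (hab : a < b) (f : ℝ → ℝ)
    (hf : ContDiff ℝ 3 f) (hmaps : MapsTo f (Icc a b) (Icc a b))
    (hnonflat : ∀ c ∈ Icc a b, deriv f c = 0 → ∃ k : ℕ, 2 ≤ k ∧ iteratedDeriv k f c ≠ 0)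
    (Jf : Set ℝ) (hJfI : Jf ⊆ Icc a b) (hJfinv : f ⁻¹' Jf = Jf)
    (hJfnt : ¬ Jf.Subsingleton)
    (hexact : ∀ U : Set ℝ, IsOpen U → (U ∩ Jf).Nonempty →
      ∃ n : ℕ, f^[n] '' (U ∩ Icc a b) = Jf)
    (p : ℝ) (hp : p ∈ Jf) (ℓ : ℕ) (hℓ : 1 ≤ ℓ) (hper : f^[ℓ] p = p)
    (hrep : 1 < |deriv (f^[ℓ]) p|)
    (x₀ : ℝ) (hx₀ : x₀ ∈ Jf) :
    Filter.limsup (fun n : ℕ => (1 / (n : ℝ)) * Real.log (preimageDerivMin f x₀ n))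
        Filter.atTop ≤ (1 / (ℓ : ℝ)) * Real.log |deriv (f^[ℓ]) p| ∧
    Filter.limsup (fun n : ℕ => (1 / (n : ℝ)) * Real.log (preimageDerivMin f x₀ n))
        Filter.atTop ≤
      sInf {χ : ℝ | ∃ q ∈ Jf, ∃ m : ℕ, 1 ≤ m ∧ f^[m] q = q ∧ 1 < |deriv (f^[m]) q| ∧
        χ = (1 / (m : ℝ)) * Real.log |deriv (f^[m]) q|} :=
  limsup_min_deriv_le_periodic_exponent_general a b f hf Jf hJfinv hJfnt hexact p hp ℓ hℓ hper hrep
    x₀ hx₀
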